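/- arXiv:2401.01027 — 2 statements merged into one kernel-verified Lean document; each statement's English description precedes it below -/
import Mathlib

section
/- For every integer n ≥ 2, Σ_{k=0}^{n−2} X_{P_k} · X_{C_{n−k}} = (n − 1) · X_{P_n}; that is, the average of the full convolution of the chromatic symmetric functions of paths and cycles with total order n is the chromatic symmetric function of the path of order n. Here X_{P_0} = 1. -/
open Finset

/-- Symmetric functions in countably many variables `x_0, x_1, x_2, …`, realized inside
the ring of formal multivariate power series over `ℚ`. -/
abbrev SymF : Type := MvPowerSeries ℕ ℚ

open Classical in
/-- The elementary symmetric function `e_k`: the sum of all squarefree monomials of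
degree `k` (so `e_0 = 1`). -/
noncomputable def esymm (k : ℕ) : SymF :=
  fun d : ℕ →₀ ℕ =>
    if (d.sum fun _ e => e) = k ∧ ∀ i, d i ≤ 1 then (1 : ℚ) else 0

/-- `e_I = e_{i_1} ⋯ e_{i_s}` for a list `I = [i_1, …, i_s]`. -/
noncomputable def esymmProd (I : List ℕ) : SymF := (I.map esymm).prod

open Classical in
/-- The chromatic symmetric function `X_G = Σ_κ ∏_v x_{κ v}`, summed over proper colorings
`κ : V → ℕ`: the coefficient of the monomial with exponent vector `d` is the number of
proper colorings all of whose color fibres have the sizes recorded by `d`. -/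
noncomputable def csf {V : Type} [Finite V] (G : SimpleGraph V) : SymF :=
  fun d : ℕ →₀ ℕ =>
    (({κ : V → ℕ | (∀ v w, G.Adj v w → κ v ≠ κ w) ∧
        ∀ i : ℕ, {v | κ v = i}.ncard = d i}).ncard : ℚ)

/-- The path `P_n` on vertices `0, 1, …, n-1`. -/
def pathG (n : ℕ) : SimpleGraph (Fin n) :=
  SimpleGraph.fromRel (fun i j => (i : ℕ) + 1 = (j : ℕ))

/-- The cycle `C_n` on vertices `0, 1, …, n-1` (for `n = 2` this is `K_2`). -/
def cycleG (n : ℕ) : SimpleGraph (Fin n) :=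
  SimpleGraph.fromRel (fun i j =>
    (i : ℕ) + 1 = (j : ℕ) ∨ ((i : ℕ) = 0 ∧ (j : ℕ) = n - 1))

/-!
Write a colouring of `P_k ⊔ C_{n-k}` (or of `P_n`) as the word of its colours along the
vertices `0, …, n-1`; the coefficient of a monomial then counts such words with a fixed
multiset of letters. Fix `j ≤ n - 2` and a proper colouring `c` of `P_n`. If `c_j ≠ c_{n-1}`,
the same word colours `P_j ⊔ C_{n-j}` properly. If `c_j = c_{n-1}`, moving the last letter to
position `j + 1` gives a proper colouring of `P_{j+1} ⊔ C_{n-j-1}` that is not a proper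
colouring of `P_n`, and every such colouring arises exactly once. Summing over `j`, each
colouring of each `P_k ⊔ C_{n-k}` with `k ≤ n - 2` is counted exactly once.
-/

section ChromaticSymmetricFunction

variable {V W : Type} [Fintype V] [Fintype W]

def IsProperColoring (G : SimpleGraph V) (κ : V → ℕ) : Prop :=
  ∀ v w, G.Adj v w → κ v ≠ κ w

abbrev ProperColoringsWithProfile (G : SimpleGraph V) (d : ℕ →₀ ℕ) : Type :=
  {κ : V → ℕ // IsProperColoring G κ ∧ Multiset.toFinsupp (univ.val.map κ) = d}

instance (G : SimpleGraph V) (d : ℕ →₀ ℕ) : Finite (ProperColoringsWithProfile G d) := by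
  classical
  have hmem (κ : V → ℕ) (v : V) : κ v ∈ (Multiset.toFinsupp (univ.val.map κ)).support := by
    rw [Multiset.toFinsupp_support, Multiset.mem_toFinset]
    exact Multiset.mem_map_of_mem _ (mem_univ v)
  exact Finite.of_injective (β := V → d.support)
    (fun κ v => ⟨κ.1 v, by simpa only [κ.2.2] using hmem κ.1 v⟩)
    fun κ₁ κ₂ h => Subtype.ext (funext fun v => congrArg Subtype.val (congrFun h v))

theorem csf_apply (G : SimpleGraph V) (d : ℕ →₀ ℕ) :
    csf G d = Nat.card (ProperColoringsWithProfile G d) := by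
  classical
  rw [csf, ← Nat.card_coe_set_eq]
  congr 1
  refine Nat.card_congr (Equiv.subtypeEquivRight fun κ => and_congr_right fun _ => ?_)
  rw [Finsupp.ext_iff]
  refine forall_congr' fun i => ?_
  rw [Multiset.toFinsupp_apply, Multiset.count_map, Set.ncard_eq_toFinset_card']
  simp only [Set.toFinset_ofPred, eq_comm]
  rfl

theorem coeff_csf_mul (G : SimpleGraph V) (H : SimpleGraph W) (d : ℕ →₀ ℕ) :
    (csf G * csf H) d =
      Nat.card {κ : (V → ℕ) × (W → ℕ) // IsProperColoring G κ.1 ∧ IsProperColoring H κ.2 ∧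
        Multiset.toFinsupp (univ.val.map κ.1 + univ.val.map κ.2) = d} := by
  classical
  have hsplit : {κ : (V → ℕ) × (W → ℕ) // IsProperColoring G κ.1 ∧ IsProperColoring H κ.2 ∧
        Multiset.toFinsupp (univ.val.map κ.1 + univ.val.map κ.2) = d} ≃
      Σ q : antidiagonal d,
        ProperColoringsWithProfile G q.1.1 × ProperColoringsWithProfile H q.1.2 :=
    { toFun κ := ⟨⟨(Multiset.toFinsupp (univ.val.map κ.1.1),
          Multiset.toFinsupp (univ.val.map κ.1.2)),
          mem_antidiagonal.2 ((map_add _ _ _).symm.trans κ.2.2.2)⟩,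
        ⟨κ.1.1, κ.2.1, rfl⟩, ⟨κ.1.2, κ.2.2.1, rfl⟩⟩
      invFun x := ⟨(x.2.1.1, x.2.2.1), x.2.1.2.1, x.2.2.2.1, by
        rw [map_add, x.2.1.2.2, x.2.2.2.2]; exact mem_antidiagonal.1 x.1.2⟩
      left_inv _ := rfl
      right_inv := by
        rintro ⟨⟨⟨d₁, d₂⟩, hq⟩, ⟨κ₁, h₁, hd₁⟩, ⟨κ₂, h₂, hd₂⟩⟩
        dsimp only at hd₁ hd₂
        subst hd₁ hd₂
        rfl }
  rw [← MvPowerSeries.coeff_apply (csf G * csf H), MvPowerSeries.coeff_mul,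
    Nat.card_congr hsplit, Nat.card_sigma, ← Finset.sum_coe_sort, Nat.cast_sum]
  refine Finset.sum_congr rfl fun q _ => ?_
  rw [MvPowerSeries.coeff_apply, MvPowerSeries.coeff_apply, csf_apply, csf_apply, Nat.card_prod,
    Nat.cast_mul]

end ChromaticSymmetricFunction

namespace List

variable {α : Type*}

/-- Lists of length at most one are never cycle colourings, although `cycleG 0` and `cycleG 1`
have no edges. -/
def IsCycleColoring (l : List α) : Prop := l.IsChain (· ≠ ·) ∧ l.head? ≠ l.getLast?

theorem isCycleColoring_cons_iff {x : α} {b : List α} :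
    IsCycleColoring (x :: b) ↔ (x :: b ++ [x]).IsChain (· ≠ ·) := by
  rw [IsCycleColoring, isChain_append, getLast?_eq_some_getLast (cons_ne_nil x b)]
  simp [eq_comm]

theorem exists_concat_cons_of_not_isChain_append {u v : List α}
    (hu : u.IsChain (· ≠ ·)) (hv : v.IsChain (· ≠ ·)) (h : ¬ (u ++ v).IsChain (· ≠ ·)) :
    ∃ a x b, u = a ++ [x] ∧ v = x :: b := by
  rcases u.eq_nil_or_concat' with rfl | ⟨a, x, rfl⟩
  · exact absurd hv (by simpa using h)
  cases v with
  | nil => exact absurd hu (by simpa using h)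
  | cons y b =>
    refine ⟨a, x, b, rfl, ?_⟩
    simp_all [isChain_append]

def rotateTail (i r : ℕ) (l : List α) : List α := l.take i ++ (l.drop i).rotate r

theorem rotateTail_append {i r : ℕ} {u : List α} (hu : u.length = i) (v : List α) :
    rotateTail i r (u ++ v) = u ++ v.rotate r := by
  rw [rotateTail, take_left' hu, drop_left' hu]

theorem not_isCycleColoring_of_length_le_one {l : List α} (hl : l.length ≤ 1) :
    ¬ IsCycleColoring l := by
  match l, hl with
  | [], _ => simp [IsCycleColoring]
  | [_], _ => simp [IsCycleColoring]

theorem exists_eq_append_cons_cons_of_not_isChain {l : List α} {j : ℕ}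
    (hj : j + 1 ≤ l.length) (hu : (l.take (j + 1)).IsChain (· ≠ ·))
    (hv : (l.drop (j + 1)).IsChain (· ≠ ·)) (h : ¬ l.IsChain (· ≠ ·)) :
    ∃ a x b, a.length = j ∧ l = a ++ x :: x :: b := by
  rw [← take_append_drop (j + 1) l] at h
  obtain ⟨a, x, b, hu, hv⟩ := exists_concat_cons_of_not_isChain_append hu hv h
  refine ⟨a, x, b, ?_, ?_⟩
  · have := congrArg length hu
    simp only [length_take, length_append, length_cons, length_nil, zero_add] at this
    omega
  · rw [← take_append_drop (j + 1) l, hu, hv]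
    simp

theorem exists_eq_append_cons_append_singleton {l : List α} {j : ℕ} (hj : j + 2 ≤ l.length)
    (h : (l.drop j).head? = l.getLast?) :
    ∃ a x b, a.length = j ∧ l = a ++ x :: (b ++ [x]) := by
  obtain ⟨x, w, hw⟩ : ∃ x w, l.drop j = x :: w :=
    ne_nil_iff_exists_cons.mp (by simp only [ne_eq, drop_eq_nil_iff, not_le]; omega)
  obtain ⟨b, y, rfl⟩ : ∃ b y, w = b ++ [y] := by
    rcases w.eq_nil_or_concat' with rfl | hw'
    · have := congrArg length hw
      simp only [length_drop, length_cons, length_nil, zero_add] at this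
      omega
    · exact hw'
  have hl : l = l.take j ++ x :: (b ++ [y]) := by rw [← hw, take_append_drop]
  refine ⟨l.take j, x, b, by simp only [length_take, inf_eq_left]; omega, ?_⟩
  have hlast : l.getLast? = some y := by
    rw [hl, ← cons_append, ← append_assoc, getLast?_concat]
  rw [hw, hlast, head?_cons, Option.some_inj] at h
  rwa [← h] at hl

theorem not_isChain_append_cons_cons (a : List α) (x : α) (b : List α) :
    ¬ (a ++ x :: x :: b).IsChain (· ≠ ·) :=
  fun h => (isChain_cons_cons.mp (isChain_split.mp h).2).1 rfl

theorem rotateTail_append_cons_cons {a : List α} {j : ℕ} (ha : a.length = j) (x : α)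
    (b : List α) : rotateTail (j + 1) 1 (a ++ x :: x :: b) = a ++ x :: (b ++ [x]) := by
  rw [append_cons, rotateTail_append (by simp [ha])]
  simp

theorem rotateTail_append_cons_append_singleton {a : List α} {j : ℕ} (ha : a.length = j)
    (x : α) (b : List α) :
    rotateTail (j + 1) b.length (a ++ x :: (b ++ [x])) = a ++ x :: x :: b := by
  rw [append_cons, rotateTail_append (by simp [ha]), rotate_append_length_eq]
  simp

end List

section Arrangements

open List

variable {α : Type*} [DecidableEq α]

/-! In `pathCycleColorings s n k` the first `k` entries colour `P_k` and the last `n - k`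
entries colour `C_{n-k}`. -/

open Classical in
noncomputable def pathColorings (s : Multiset α) (n : ℕ) : Finset (List α) :=
  {l ∈ s.lists.toFinset | l.length = n ∧ l.IsChain (· ≠ ·)}

open Classical in
noncomputable def pathCycleColorings (s : Multiset α) (n k : ℕ) : Finset (List α) :=
  {l ∈ s.lists.toFinset | l.length = n ∧ (l.take k).IsChain (· ≠ ·) ∧ IsCycleColoring (l.drop k)}

variable {s : Multiset α} {n : ℕ}

theorem mem_pathColorings {l : List α} :
    l ∈ pathColorings s n ↔ s = l ∧ l.length = n ∧ l.IsChain (· ≠ ·) := by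
  simp [pathColorings]

theorem mem_pathCycleColorings {k : ℕ} {l : List α} :
    l ∈ pathCycleColorings s n k ↔ s = l ∧ l.length = n ∧ (l.take k).IsChain (· ≠ ·) ∧
      IsCycleColoring (l.drop k) := by
  simp [pathCycleColorings]

theorem pathCycleColorings_sub_one : pathCycleColorings s n (n - 1) = ∅ := by
  refine Finset.eq_empty_of_forall_notMem fun l hl => ?_
  obtain ⟨-, hlen, -, hcyc⟩ := mem_pathCycleColorings.mp hl
  exact not_isCycleColoring_of_length_le_one (by simp only [length_drop]; omega) hcyc

open Classical in
theorem filter_not_isChain_pathCycleColorings_zero :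
    (pathCycleColorings s n 0).filter (fun l => ¬ l.IsChain (· ≠ ·)) = ∅ := by
  refine Finset.eq_empty_of_forall_notMem fun l hl => ?_
  rw [Finset.mem_filter, mem_pathCycleColorings, drop_zero] at hl
  exact hl.2 hl.1.2.2.2.1

open Classical in
theorem filter_isChain_pathCycleColorings {k : ℕ} (hk : k + 2 ≤ n) :
    (pathCycleColorings s n k).filter (fun l => l.IsChain (· ≠ ·)) =
      (pathColorings s n).filter (fun l => (l.drop k).head? ≠ l.getLast?) := by
  ext l
  simp only [Finset.mem_filter, mem_pathCycleColorings, mem_pathColorings, IsCycleColoring]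
  have hlast (hlen : l.length = n) : (l.drop k).getLast? = l.getLast? := by
    rw [getLast?_drop, if_neg (by omega)]
  exact ⟨fun ⟨⟨hs, hlen, _, _, hne⟩, hl⟩ => ⟨⟨hs, hlen, hl⟩, hlast hlen ▸ hne⟩,
    fun ⟨⟨hs, hlen, hl⟩, hne⟩ => ⟨⟨hs, hlen, hl.take k, hl.drop k, hlast hlen ▸ hne⟩, hl⟩⟩

open Classical in
theorem append_cons_cons_mem_filter_not_isChain_iff {a b : List α} {x : α} {j : ℕ}
    (ha : a.length = j) :
    a ++ x :: x :: b ∈ (pathCycleColorings s n (j + 1)).filter (fun l => ¬ l.IsChain (· ≠ ·)) ↔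
      s = ↑(a ++ x :: x :: b) ∧ j + b.length + 2 = n ∧ (a ++ [x]).IsChain (· ≠ ·) ∧
        IsCycleColoring (x :: b) := by
  have htake : (a ++ x :: x :: b).take (j + 1) = a ++ [x] := by simp [take_append, ha]
  have hdrop : (a ++ x :: x :: b).drop (j + 1) = x :: b := by simp [drop_append, ha]
  rw [Finset.mem_filter, mem_pathCycleColorings, htake, hdrop,
    and_iff_left (not_isChain_append_cons_cons a x b)]
  simp [ha]
  omega

open Classical in
theorem append_cons_append_singleton_mem_filter_iff {a b : List α} {x : α} {j : ℕ}
    (ha : a.length = j) :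
    a ++ x :: (b ++ [x]) ∈ (pathColorings s n).filter (fun l => (l.drop j).head? = l.getLast?) ↔
      s = ↑(a ++ x :: x :: b) ∧ j + b.length + 2 = n ∧ (a ++ [x]).IsChain (· ≠ ·) ∧
        IsCycleColoring (x :: b) := by
  have hperm : (a ++ x :: (b ++ [x])).Perm (a ++ x :: x :: b) :=
    ((perm_append_singleton x b).cons x).append_left a
  have hlast : (a ++ x :: (b ++ [x])).getLast? = some x := by
    rw [← cons_append, ← append_assoc, getLast?_concat]
  rw [Finset.mem_filter, mem_pathColorings, Multiset.coe_eq_coe.mpr hperm, isChain_split,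
    isCycleColoring_cons_iff, drop_left' ha, hlast]
  simp [ha]
  omega

open Classical in
theorem card_filter_not_isChain_pathCycleColorings_succ {j : ℕ} (hj : j + 2 ≤ n) :
    #((pathCycleColorings s n (j + 1)).filter (fun l => ¬ l.IsChain (· ≠ ·))) =
      #((pathColorings s n).filter (fun l => (l.drop j).head? = l.getLast?)) := by
  set A := (pathCycleColorings s n (j + 1)).filter (fun l => ¬ l.IsChain (· ≠ ·))
  set P := (pathColorings s n).filter (fun l => (l.drop j).head? = l.getLast?)
  have hA {l} (hl : l ∈ A) : ∃ a x b, a.length = j ∧ l = a ++ x :: x :: b := by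
    obtain ⟨⟨-, hlen, htake, hcyc⟩, hl⟩ :=
      (Finset.mem_filter.mp hl).imp_left mem_pathCycleColorings.mp
    exact exists_eq_append_cons_cons_of_not_isChain (by omega) htake hcyc.1 hl
  have hP {l} (hl : l ∈ P) : ∃ a x b, a.length = j ∧ l = a ++ x :: (b ++ [x]) := by
    obtain ⟨⟨-, hlen, -⟩, hl⟩ := (Finset.mem_filter.mp hl).imp_left mem_pathColorings.mp
    exact exists_eq_append_cons_append_singleton (by omega) hl
  -- move entry `j + 1` to the end, and back
  refine Finset.card_nbij' (rotateTail (j + 1) 1) (rotateTail (j + 1) (n - j - 2)) ?_ ?_ ?_ ?_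
  · intro l hl
    obtain ⟨a, x, b, ha, rfl⟩ := hA hl
    rw [Finset.mem_coe, rotateTail_append_cons_cons ha]
    exact (append_cons_append_singleton_mem_filter_iff ha).mpr
      ((append_cons_cons_mem_filter_not_isChain_iff ha).mp hl)
  · intro l hl
    obtain ⟨a, x, b, ha, rfl⟩ := hP hl
    have hmem := (append_cons_append_singleton_mem_filter_iff ha).mp hl
    rw [Finset.mem_coe, show n - j - 2 = b.length by omega,
      rotateTail_append_cons_append_singleton ha]
    exact (append_cons_cons_mem_filter_not_isChain_iff ha).mpr hmem
  · intro l hl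
    obtain ⟨a, x, b, ha, rfl⟩ := hA hl
    have hb := ((append_cons_cons_mem_filter_not_isChain_iff ha).mp hl).2.1
    rw [rotateTail_append_cons_cons ha, show n - j - 2 = b.length by omega,
      rotateTail_append_cons_append_singleton ha]
  · intro l hl
    obtain ⟨a, x, b, ha, rfl⟩ := hP hl
    have hb := ((append_cons_append_singleton_mem_filter_iff ha).mp hl).2.1
    rw [show n - j - 2 = b.length by omega, rotateTail_append_cons_append_singleton ha,
      rotateTail_append_cons_cons ha]

open Classical in
theorem card_pathColorings_eq {j : ℕ} (hj : j + 2 ≤ n) :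
    #(pathColorings s n) =
      #((pathCycleColorings s n j).filter (fun l => l.IsChain (· ≠ ·))) +
        #((pathCycleColorings s n (j + 1)).filter (fun l => ¬ l.IsChain (· ≠ ·))) := by
  rw [filter_isChain_pathCycleColorings hj, card_filter_not_isChain_pathCycleColorings_succ hj,
    add_comm, Finset.card_filter_add_card_filter_not]

open Classical in
theorem sum_card_pathCycleColorings :
    ∑ k ∈ Finset.range (n - 1), #(pathCycleColorings s n k) = (n - 1) * #(pathColorings s n) := by
  set f := fun k => #((pathCycleColorings s n k).filter (fun l => l.IsChain (· ≠ ·)))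
  set g := fun k => #((pathCycleColorings s n k).filter (fun l => ¬ l.IsChain (· ≠ ·)))
  have hshift : ∑ k ∈ Finset.range (n - 1), g k = ∑ k ∈ Finset.range (n - 1), g (k + 1) := by
    obtain hn | ⟨m, hm⟩ : n - 1 = 0 ∨ ∃ m, n - 1 = m + 1 := by
      rcases n - 1 with _ | m <;> simp
    · rw [hn, Finset.sum_range_zero, Finset.sum_range_zero]
    · have hg0 : g 0 = 0 := by
        simp only [g, filter_not_isChain_pathCycleColorings_zero, Finset.card_empty]
      have hglast : g (m + 1) = 0 := by
        simp only [g, ← hm, pathCycleColorings_sub_one, Finset.filter_empty, Finset.card_empty]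
      rw [hm, Finset.sum_range_succ', Finset.sum_range_succ, hg0, hglast]
  calc ∑ k ∈ Finset.range (n - 1), #(pathCycleColorings s n k)
      = ∑ k ∈ Finset.range (n - 1), (f k + g k) := by
        simp only [f, g, Finset.card_filter_add_card_filter_not]
    _ = ∑ k ∈ Finset.range (n - 1), (f k + g (k + 1)) := by
        rw [Finset.sum_add_distrib, Finset.sum_add_distrib, hshift]
    _ = ∑ k ∈ Finset.range (n - 1), #(pathColorings s n) :=
        Finset.sum_congr rfl fun k hk =>
          (card_pathColorings_eq (by rw [Finset.mem_range] at hk; omega)).symm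
    _ = (n - 1) * #(pathColorings s n) := by simp

end Arrangements

theorem card_subtype_ofFn_eq_card_filter {α : Type*} [DecidableEq α] (P : List α → Prop)
    [DecidablePred P] (s : Multiset α) (n : ℕ) :
    Nat.card {κ : Fin n → α // P (List.ofFn κ) ∧ ↑(List.ofFn κ) = s} =
      #{l ∈ s.lists.toFinset | l.length = n ∧ P l} := by
  rw [← Nat.card_eq_finsetCard]
  refine Nat.card_congr (Equiv.ofBijective (fun κ => ⟨List.ofFn κ.1, ?_⟩) ⟨?_, ?_⟩)
  · simp [κ.2.1, ← κ.2.2]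
  · exact fun κ₁ κ₂ h => Subtype.ext (List.ofFn_injective (congrArg Subtype.val h))
  · rintro ⟨l, hl⟩
    obtain ⟨hs, rfl, hP⟩ : s = l ∧ l.length = n ∧ P l := by simpa using hl
    exact ⟨⟨fun i => l[i], by simp [hP, hs]⟩, Subtype.ext List.ofFn_getElem⟩

theorem pathG_adj {n : ℕ} {v w : Fin n} :
    (pathG n).Adj v w ↔ (v : ℕ) + 1 = w ∨ (w : ℕ) + 1 = v := by
  rw [pathG, SimpleGraph.fromRel_adj, and_iff_right_iff_imp]
  rintro (h | h) rfl <;> omega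

theorem cycleG_adj {m : ℕ} (hm : 2 ≤ m) {v w : Fin m} :
    (cycleG m).Adj v w ↔ (pathG m).Adj v w ∨
      ((v : ℕ) = 0 ∧ (w : ℕ) = m - 1) ∨ ((w : ℕ) = 0 ∧ (v : ℕ) = m - 1) := by
  rw [cycleG, SimpleGraph.fromRel_adj, pathG_adj]
  constructor
  · rintro ⟨-, (h | h) | (h | h)⟩ <;> simp [h]
  · intro h
    refine ⟨fun hvw => ?_, by tauto⟩
    subst hvw
    omega

theorem isProperColoring_pathG_iff {n : ℕ} (κ : Fin n → ℕ) :
    IsProperColoring (pathG n) κ ↔ (List.ofFn κ).IsChain (· ≠ ·) := by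
  simp only [List.isChain_iff_getElem, List.getElem_ofFn, List.length_ofFn]
  constructor
  · exact fun h i hi => h _ _ (pathG_adj.mpr (Or.inl rfl))
  · intro h v w hadj
    rcases pathG_adj.mp hadj with hvw | hwv
    · rw [show w = ⟨v + 1, by omega⟩ from Fin.ext hvw.symm]
      exact h v (by omega)
    · rw [show v = ⟨w + 1, by omega⟩ from Fin.ext hwv.symm]
      exact (h w (by omega)).symm

theorem isProperColoring_cycleG_iff {m : ℕ} (hm : 2 ≤ m) (κ : Fin m → ℕ) :
    IsProperColoring (cycleG m) κ ↔ List.IsCycleColoring (List.ofFn κ) := by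
  have hhead : (List.ofFn κ).head? = some (κ ⟨0, by omega⟩) := by
    simp [List.head?_eq_getElem?, List.getElem?_ofFn]; omega
  have hlast : (List.ofFn κ).getLast? = some (κ ⟨m - 1, by omega⟩) := by
    simp [List.getLast?_eq_getElem?, List.getElem?_ofFn]; omega
  rw [List.IsCycleColoring, ← isProperColoring_pathG_iff, hhead, hlast, ne_eq, Option.some_inj]
  simp only [IsProperColoring, cycleG_adj hm]
  constructor
  · exact fun h => ⟨fun v w hvw => h v w (Or.inl hvw), h _ _ (Or.inr (Or.inl ⟨rfl, rfl⟩))⟩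
  · rintro ⟨hpath, hends⟩ v w (hvw | ⟨hv, hw⟩ | ⟨hw, hv⟩)
    · exact hpath v w hvw
    · rw [show v = ⟨0, by omega⟩ from Fin.ext hv, show w = ⟨m - 1, by omega⟩ from Fin.ext hw]
      exact hends
    · rw [show v = ⟨m - 1, by omega⟩ from Fin.ext hv, show w = ⟨0, by omega⟩ from Fin.ext hw]
      exact Ne.symm hends

theorem csf_pathG_toFinsupp (n : ℕ) (s : Multiset ℕ) :
    csf (pathG n) (Multiset.toFinsupp s) = #(pathColorings s n) := by
  rw [csf_apply, pathColorings, ← card_subtype_ofFn_eq_card_filter]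
  refine congrArg _ (Nat.card_congr (Equiv.subtypeEquivRight fun κ => ?_))
  rw [isProperColoring_pathG_iff, Fin.univ_val_map, EmbeddingLike.apply_eq_iff_eq]

theorem coeff_csf_pathG_mul_csf_cycleG (k : ℕ) {m : ℕ} (hm : 2 ≤ m) (s : Multiset ℕ) :
    (csf (pathG k) * csf (cycleG m)) (Multiset.toFinsupp s) =
      #(pathCycleColorings s (k + m) k) := by
  rw [coeff_csf_mul, pathCycleColorings, ← card_subtype_ofFn_eq_card_filter]
  refine congrArg _ (Nat.card_congr ((Fin.appendEquiv k m).subtypeEquiv fun κ => ?_))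
  rw [show Fin.appendEquiv k m κ = Fin.append κ.1 κ.2 from rfl, List.ofFn_fin_append,
    List.take_left' List.length_ofFn, List.drop_left' List.length_ofFn, isProperColoring_pathG_iff,
    isProperColoring_cycleG_iff hm, Fin.univ_val_map, Fin.univ_val_map, Multiset.coe_add,
    EmbeddingLike.apply_eq_iff_eq, and_assoc]

/-- For `n ≥ 2`, `Σ_{k=0}^{n-2} X_{P_k} X_{C_{n-k}} = (n - 1) X_{P_n}`,
where `X_{P_0} = 1`. -/
theorem stmt_6 (n : ℕ) (hn : 2 ≤ n) :
    ∑ k ∈ Finset.range (n - 1), csf (pathG k) * csf (cycleG (n - k)) =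
      ((n : ℚ) - 1) • csf (pathG n) := by
  ext d
  obtain ⟨s, rfl⟩ := Multiset.toFinsupp.surjective d
  have hterm : ∀ k ∈ Finset.range (n - 1),
      MvPowerSeries.coeff (Multiset.toFinsupp s) (csf (pathG k) * csf (cycleG (n - k))) =
        #(pathCycleColorings s n k) := by
    intro k hk
    have hkn : k + 2 ≤ n := by rw [Finset.mem_range] at hk; omega
    rw [MvPowerSeries.coeff_apply, coeff_csf_pathG_mul_csf_cycleG k (by omega),
      Nat.add_sub_cancel' (by omega)]
  rw [map_sum, Finset.sum_congr rfl hterm, ← Nat.cast_sum, sum_card_pathCycleColorings,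
    MvPowerSeries.coeff_smul, MvPowerSeries.coeff_apply, csf_pathG_toFinsupp, Nat.cast_mul,
    Nat.cast_sub (by omega), Nat.cast_one]
end

section
/- Let a ≥ 1 and 0 ≤ b ≤ a. Then X_{K(ab)} = (a−1)! · b! · Σ_{i=0}^{b} (a + b − 2i) · e_{a+b−i} · e_i, and X_{K(a1b)} = (a−1)! · b! · ( (a−1)(b+1) · e_a · e_{b+1} + Σ_{i=0}^{b} (a + b + 1 − 2i) · e_{a+b+1−i} · e_i ), where e_0 = 1. -/
open Finset

/-- The barbell `K(a 1^b c)` on `a + b + c` vertices: a clique on `{0, …, a-1}`, a path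
`a-1, a, …, a+b-1`, and a clique on `{a+b-1, …, a+b+c-1}` (the `K`-chain of the
composition `(a, 1, …, 1, c)` with `b` middle parts `1`). -/
def barbellG (a b c : ℕ) : SimpleGraph (Fin (a + b + c)) :=
  SimpleGraph.fromRel (fun i j =>
    ((i : ℕ) < a ∧ (j : ℕ) < a) ∨
    ((i : ℕ) + 1 = (j : ℕ) ∧ a ≤ (j : ℕ) ∧ (j : ℕ) + 1 ≤ a + b) ∨
    (a + b ≤ (i : ℕ) + 1 ∧ a + b ≤ (j : ℕ) + 1))

/-!
In both graphs every non-edge joins two disjoint vertex sets `A` and `B`: for `K(ab)` the two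
cliques without their shared vertex, for `K(a1b)` the cliques `K_a` and `K_{b+1}`, which are joined
by a single edge. Hence a color class has at most two vertices, and a class of size two is a
non-adjacent pair in `A × B`. At a monomial whose exponent vector has `k` entries `2` and `m`
entries `1`, the colorings are therefore counted by `k` labelled disjoint non-adjacent pairs times
`m!`: this is `(a-1)^(k) b^(k) m!` (falling factorials) for `K(ab)` and
`(a^(k) (b+1)^(k) - k (a-1)^(k-1) b^(k-1)) m!` for `K(a1b)`. On the other side the coefficient of
`e_{n-i} e_i` is `C(m, i-k)`, and the weighted sum over `i` telescopes by
`(m - j) C(m, j) = (j + 1) C(m, j + 1)`.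
-/

open scoped Nat

section Arithmetic

open Nat

theorem Nat.descFactorial_mul_descFactorial_mul_factorial {x y k : ℕ} (hx : k ≤ x) (hy : k ≤ y) :
    x.descFactorial k * y.descFactorial k * (x - k + (y - k))! =
      x ! * y ! * (x - k + (y - k)).choose (y - k) := by
  apply Nat.eq_of_mul_eq_mul_left (mul_pos (x - k).factorial_pos (y - k).factorial_pos)
  calc (x - k)! * (y - k)! * (x.descFactorial k * y.descFactorial k * (x - k + (y - k))!)
      = (x - k)! * x.descFactorial k * ((y - k)! * y.descFactorial k) * (x - k + (y - k))! := by
        ring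
    _ = x ! * y ! * ((x - k + (y - k)).choose (y - k) * (x - k)! * (y - k)!) := by
      rw [factorial_mul_descFactorial hx, factorial_mul_descFactorial hy,
        add_choose_mul_factorial_mul_factorial]
    _ = (x - k)! * (y - k)! * (x ! * y ! * (x - k + (y - k)).choose (y - k)) := by ring

theorem sub_mul_choose_eq_add_one_mul_choose (m j : ℕ) :
    ((m : ℚ) - j) * m.choose j = (j + 1) * m.choose (j + 1) := by
  rcases le_or_gt j m with hjm | hjm
  · have := Nat.choose_succ_right_eq m j
    qify [hjm] at this
    linarith
  · rw [Nat.choose_eq_zero_of_lt hjm, Nat.choose_eq_zero_of_lt (by omega)]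
    simp

theorem sum_range_sub_mul_choose (k m t : ℕ) :
    ∑ i ∈ range t, ((2 * k + m : ℚ) - 2 * i) * (if k ≤ i then (m.choose (i - k) : ℚ) else 0) =
      ((t - k : ℕ) : ℚ) * m.choose (t - k) := by
  induction t with
  | zero => simp
  | succ t ih =>
    rw [sum_range_succ, ih]
    by_cases hkt : k ≤ t
    · obtain ⟨j, rfl⟩ := Nat.exists_eq_add_of_le hkt
      rw [if_pos hkt, show k + j + 1 - k = j + 1 by omega, show k + j - k = j by omega]
      push_cast
      linear_combination sub_mul_choose_eq_add_one_mul_choose m j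
    · rw [if_neg hkt, show t + 1 - k = 0 by omega, show t - k = 0 by omega]
      simp

theorem descFactorial_mul_factorial_eq_barbell_zero {a b k m : ℕ} (ha : 1 ≤ a) (hb : b ≤ a)
    (h : 2 * k + m = a + b) :
    (a - 1).descFactorial k * b.descFactorial k * m ! =
      (a - 1)! * b ! * ((b + 1 - k) * m.choose (b + 1 - k)) := by
  rcases lt_or_ge b k with hbk | hkb
  · rw [descFactorial_eq_zero_iff_lt.mpr hbk, show b + 1 - k = 0 by omega]
    simp
  rcases lt_or_ge (a - 1) k with hak | hka
  · rw [descFactorial_eq_zero_iff_lt.mpr hak, show m = 0 by omega,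
      Nat.choose_eq_zero_of_lt (by omega : 0 < b + 1 - k)]
    simp
  have core := Nat.descFactorial_mul_descFactorial_mul_factorial hka hkb
  rw [show m = a - 1 - k + (b - k) + 1 by omega, show b + 1 - k = b - k + 1 by omega,
    factorial_succ, mul_comm (b - k + 1), ← add_one_mul_choose_eq]
  calc _ = (a - 1 - k + (b - k) + 1) *
        ((a - 1).descFactorial k * b.descFactorial k * (a - 1 - k + (b - k))!) := by ring
    _ = _ := by rw [core]; ring

theorem descFactorial_mul_factorial_eq_barbell_one {a b k m : ℕ} (ha : 1 ≤ a) (hb : b ≤ a)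
    (h : 2 * k + m = a + 1 + b) :
    ((a.descFactorial k * (b + 1).descFactorial k : ℕ) -
        (k * ((a - 1).descFactorial (k - 1) * b.descFactorial (k - 1)) : ℕ) : ℚ) * m ! =
      (a - 1)! * b ! * (((a : ℚ) - 1) * (b + 1) *
        (if k ≤ b + 1 then (m.choose (b + 1 - k) : ℚ) else 0) +
          ((b + 1 - k : ℕ) : ℚ) * m.choose (b + 1 - k)) := by
  obtain ⟨a, rfl⟩ := Nat.exists_eq_add_of_le' ha
  rcases k with _ | k
  · have := Nat.add_choose_mul_factorial_mul_factorial (a + 1) (b + 1)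
    rw [show a + 1 + (b + 1) = m by omega] at this
    rw [if_pos (Nat.zero_le _), ← this]
    push_cast [factorial_succ, descFactorial_zero]
    ring
  rw [succ_descFactorial_succ, succ_descFactorial_succ, add_tsub_cancel_right,
    add_tsub_cancel_right, show b + 1 - (k + 1) = b - k by omega]
  rcases lt_or_ge b k with hbk | hkb
  · rw [descFactorial_eq_zero_iff_lt.mpr hbk, if_neg (by omega), show b - k = 0 by omega]
    simp
  have hka : k ≤ a := by omega
  have core := Nat.descFactorial_mul_descFactorial_mul_factorial hka hkb
  rw [show a - k + (b - k) = m by omega] at core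
  rw [if_pos (by omega)]
  qify [hkb] at core ⊢
  linear_combination ((a + 1 : ℚ) * (b + 1) - (k + 1)) * core

end Arithmetic

/-- Empty for `r = 0`, since only the support of `d` is searched. -/
def levelSet (d : ℕ →₀ ℕ) (r : ℕ) : Finset ℕ := d.support.filter (fun c => d c = r)

section LevelSet

variable {d : ℕ →₀ ℕ}

theorem mem_levelSet {r c : ℕ} (hr : r ≠ 0) : c ∈ levelSet d r ↔ d c = r := by
  simp only [levelSet, mem_filter, Finsupp.mem_support_iff]
  omega

theorem degree_eq_of_le_two (hd : ∀ c, d c ≤ 2) :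
    d.degree = 2 * #(levelSet d 2) + #(levelSet d 1) := by
  have hsplit : ∀ c ∈ d.support,
      d c = 2 * (if d c = 2 then 1 else 0) + (if d c = 1 then 1 else 0) := by
    intro c _
    have := hd c
    split_ifs <;> omega
  rw [Finsupp.degree_apply, sum_congr rfl hsplit, sum_add_distrib, ← mul_sum, sum_boole,
    sum_boole]
  rfl

theorem disjoint_levelSet_two_one : Disjoint (levelSet d 2) (levelSet d 1) := by
  rw [disjoint_left]
  intro c h2 h1
  rw [mem_levelSet two_ne_zero] at h2
  rw [mem_levelSet one_ne_zero] at h1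
  omega

theorem eq_zero_of_notMem_levelSet {c : ℕ} (hd : ∀ c, d c ≤ 2) (h2 : c ∉ levelSet d 2)
    (h1 : c ∉ levelSet d 1) : d c = 0 := by
  rw [mem_levelSet two_ne_zero] at h2
  rw [mem_levelSet one_ne_zero] at h1
  have := hd c
  omega

end LevelSet

noncomputable def Finset.indicatorFinsupp (S : Finset ℕ) : ℕ →₀ ℕ :=
  Finsupp.indicator S fun _ _ => 1

@[simp]
theorem Finset.indicatorFinsupp_apply (S : Finset ℕ) (c : ℕ) :
    S.indicatorFinsupp c = if c ∈ S then 1 else 0 := by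
  simp [indicatorFinsupp, Finsupp.indicator_apply]

@[simp]
theorem Finset.support_indicatorFinsupp (S : Finset ℕ) : S.indicatorFinsupp.support = S := by
  ext c
  simp

theorem Finset.indicatorFinsupp_le_one (S : Finset ℕ) (c : ℕ) : S.indicatorFinsupp c ≤ 1 := by
  rw [indicatorFinsupp_apply]
  split_ifs <;> omega

theorem Finset.degree_indicatorFinsupp (S : Finset ℕ) : S.indicatorFinsupp.degree = #S := by
  rw [Finsupp.degree_apply, support_indicatorFinsupp, card_eq_sum_ones]
  exact sum_congr rfl fun c hc => by simp [hc]

def IsSquarefreeOfDegree (k : ℕ) (p : ℕ →₀ ℕ) : Prop := p.degree = k ∧ ∀ c, p c ≤ 1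

open Classical in
theorem coeff_esymm (k : ℕ) (p : ℕ →₀ ℕ) :
    MvPowerSeries.coeff p (esymm k) = if IsSquarefreeOfDegree k p then 1 else 0 :=
  -- the two conditions agree definitionally, only their `Decidable` instances differ
  if_congr Iff.rfl rfl rfl

open Classical in
theorem coeff_esymm_mul_esymm (j i : ℕ) (d : ℕ →₀ ℕ) :
    MvPowerSeries.coeff d (esymm j * esymm i) =
      #{p ∈ antidiagonal d | IsSquarefreeOfDegree j p.1 ∧ IsSquarefreeOfDegree i p.2} := by
  simp only [MvPowerSeries.coeff_mul, coeff_esymm, ite_zero_mul_ite_zero, mul_one]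
  rw [sum_boole]

section Splittings

variable {d : ℕ →₀ ℕ}

noncomputable def squarefreeSplitting (d : ℕ →₀ ℕ) (T : Finset ℕ) : (ℕ →₀ ℕ) × (ℕ →₀ ℕ) :=
  ((levelSet d 2 ∪ (levelSet d 1 \ T)).indicatorFinsupp, (levelSet d 2 ∪ T).indicatorFinsupp)

theorem squarefreeSplitting_mem_antidiagonal (hd : ∀ c, d c ≤ 2) {T : Finset ℕ}
    (hT : T ⊆ levelSet d 1) : squarefreeSplitting d T ∈ antidiagonal d := by
  rw [HasAntidiagonal.mem_antidiagonal]
  ext c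
  have := hd c
  have hTc : c ∈ T → d c = 1 := fun h => (mem_levelSet one_ne_zero).mp (hT h)
  simp only [squarefreeSplitting, Finsupp.add_apply, indicatorFinsupp_apply, mem_union,
    mem_sdiff, mem_levelSet two_ne_zero, mem_levelSet one_ne_zero]
  by_cases hc : c ∈ T
  · simp [hc, hTc hc]
  · simp only [hc, not_false_eq_true, and_true, or_false]
    split_ifs <;> omega

theorem eq_squarefreeSplitting {p : (ℕ →₀ ℕ) × (ℕ →₀ ℕ)} (hp : p ∈ antidiagonal d)
    (h1 : ∀ c, p.1 c ≤ 1) (h2 : ∀ c, p.2 c ≤ 1) :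
    p = squarefreeSplitting d (p.2.support ∩ levelSet d 1) := by
  rw [HasAntidiagonal.mem_antidiagonal] at hp
  have hc (c : ℕ) : p.1 c + p.2 c = d c := by rw [← hp]; rfl
  refine Prod.ext (Finsupp.ext fun c => ?_) (Finsupp.ext fun c => ?_) <;>
  · have := h1 c
    have := h2 c
    have := hc c
    simp only [squarefreeSplitting, indicatorFinsupp_apply, mem_union, mem_inter, mem_sdiff,
      Finsupp.mem_support_iff, mem_levelSet two_ne_zero, mem_levelSet one_ne_zero]
    split_ifs <;> omega

theorem levelSet_two_union_inter_levelSet_one {T : Finset ℕ} (hT : T ⊆ levelSet d 1) :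
    (levelSet d 2 ∪ T) ∩ levelSet d 1 = T := by
  rw [union_inter_distrib_right, disjoint_iff_inter_eq_empty.mp disjoint_levelSet_two_one,
    empty_union, inter_eq_left.mpr hT]

open Classical in
/-- A splitting of `d` into two squarefree exponent vectors is determined by the colors used once
that go to the second vector. -/
theorem card_squarefree_splittings {j i : ℕ} (hd : ∀ c, d c ≤ 2) (hdeg : d.degree = j + i) :
    #{p ∈ antidiagonal d | IsSquarefreeOfDegree j p.1 ∧ IsSquarefreeOfDegree i p.2} =
      #{T ∈ (levelSet d 1).powerset | #(levelSet d 2) + #T = i} := by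
  have hdisj {T} (hT : T ⊆ levelSet d 1) : Disjoint (levelSet d 2) T :=
    disjoint_levelSet_two_one.mono_right hT
  apply card_nbij' (fun p => p.2.support ∩ levelSet d 1) (squarefreeSplitting d)
  · rintro p hp
    simp only [coe_filter, Set.mem_ofPred_eq] at hp ⊢
    obtain ⟨hp, ⟨-, h1⟩, hi, h2⟩ := hp
    refine ⟨mem_powerset.mpr inter_subset_right, ?_⟩
    have := congrArg (Finsupp.degree ∘ Prod.snd) (eq_squarefreeSplitting hp h1 h2)
    rwa [Function.comp_apply, Function.comp_apply, squarefreeSplitting, degree_indicatorFinsupp,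
      card_union_of_disjoint (hdisj inter_subset_right), hi, eq_comm] at this
  · rintro T hT
    simp only [coe_filter, Set.mem_ofPred_eq, mem_powerset] at hT ⊢
    obtain ⟨hT, hi⟩ := hT
    have hdegd := degree_eq_of_le_two hd
    have hT' := card_le_card hT
    refine ⟨squarefreeSplitting_mem_antidiagonal hd hT, ⟨?_, indicatorFinsupp_le_one _⟩, ?_,
      indicatorFinsupp_le_one _⟩
    · rw [squarefreeSplitting, degree_indicatorFinsupp,
        card_union_of_disjoint (hdisj sdiff_subset), card_sdiff_of_subset hT]
      omega
    · rw [squarefreeSplitting, degree_indicatorFinsupp, card_union_of_disjoint (hdisj hT), hi]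
  · rintro p hp
    simp only [coe_filter, Set.mem_ofPred_eq] at hp
    exact (eq_squarefreeSplitting hp.1 hp.2.1.2 hp.2.2.2).symm
  · rintro T hT
    simp only [coe_filter, Set.mem_ofPred_eq, mem_powerset] at hT
    dsimp only
    rw [squarefreeSplitting, support_indicatorFinsupp, levelSet_two_union_inter_levelSet_one hT.1]

end Splittings

theorem card_filter_powerset_add_card_eq {α : Type*} (s : Finset α) (k i : ℕ) :
    #{T ∈ s.powerset | k + #T = i} = if k ≤ i then (#s).choose (i - k) else 0 := by
  split_ifs with h
  · rw [← card_powersetCard, powersetCard_eq_filter]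
    exact congrArg card (filter_congr fun T _ => by omega)
  · exact card_eq_zero.mpr (filter_eq_empty_iff.mpr fun T _ => by omega)

theorem coeff_esymm_mul_esymm_of_le_two {d : ℕ →₀ ℕ} {j i : ℕ} (hd : ∀ c, d c ≤ 2)
    (hdeg : d.degree = j + i) :
    MvPowerSeries.coeff d (esymm j * esymm i) =
      if #(levelSet d 2) ≤ i then ((#(levelSet d 1)).choose (i - #(levelSet d 2)) : ℚ) else 0 := by
  rw [coeff_esymm_mul_esymm, card_squarefree_splittings hd hdeg,
    card_filter_powerset_add_card_eq, Nat.cast_ite, Nat.cast_zero]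

theorem coeff_esymm_mul_esymm_eq_zero {d : ℕ →₀ ℕ} {j i : ℕ}
    (h : ¬ ((∀ c, d c ≤ 2) ∧ d.degree = j + i)) :
    MvPowerSeries.coeff d (esymm j * esymm i) = 0 := by
  classical
  rw [coeff_esymm_mul_esymm, Nat.cast_eq_zero, card_eq_zero, filter_eq_empty_iff]
  rintro p hp ⟨⟨hj, h1⟩, hi, h2⟩
  rw [HasAntidiagonal.mem_antidiagonal] at hp
  subst hp
  refine h ⟨fun c => ?_, by rw [map_add, hj, hi]⟩
  have := h1 c
  have := h2 c
  rw [Finsupp.add_apply]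
  omega

section Colorings

variable {V : Type}

def properColoringsOfType (G : SimpleGraph V) (d : ℕ →₀ ℕ) : Set (V → ℕ) :=
  {κ | (∀ v w, G.Adj v w → κ v ≠ κ w) ∧ ∀ i, {v | κ v = i}.ncard = d i}

theorem coeff_csf [Finite V] (G : SimpleGraph V) (d : ℕ →₀ ℕ) :
    MvPowerSeries.coeff d (csf G) = (properColoringsOfType G d).ncard := rfl

theorem apply_ne_zero_of_mem_properColoringsOfType [Finite V] {G : SimpleGraph V}
    {d : ℕ →₀ ℕ} {κ : V → ℕ} (hκ : κ ∈ properColoringsOfType G d) (v : V) : d (κ v) ≠ 0 := by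
  rw [← hκ.2]
  exact ((Set.ncard_pos (Set.toFinite {u | κ u = κ v})).mpr ⟨v, rfl⟩).ne'

theorem degree_eq_card_of_mem_properColoringsOfType [Fintype V] {G : SimpleGraph V} {d : ℕ →₀ ℕ}
    {κ : V → ℕ} (hκ : κ ∈ properColoringsOfType G d) : d.degree = Fintype.card V := by
  have hfib : ∀ c, #{v | κ v = c} = d c := fun c => by
    rw [← hκ.2 c, ← Set.ncard_coe_finset, coe_filter]
    simp
  rw [Finsupp.degree_apply, ← card_univ, card_eq_sum_card_fiberwise (f := κ) (t := d.support)]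
  · exact sum_congr rfl fun c _ => (hfib c).symm
  · intro v _
    exact Finsupp.mem_support_iff.mpr (apply_ne_zero_of_mem_properColoringsOfType hκ v)

def SimpleGraph.NonAdjBetween (G : SimpleGraph V) (A B : Finset V) : Prop :=
  ∀ ⦃v w⦄, v ≠ w → ¬ G.Adj v w → v ∈ A ∧ w ∈ B ∨ v ∈ B ∧ w ∈ A

abbrev NonAdjPairings (G : SimpleGraph V) (A B : Finset V) (X : Type) :=
  {pq : (X ↪ A) × (X ↪ B) // ∀ x, ¬ G.Adj (pq.1 x) (pq.2 x)}

namespace SimpleGraph.NonAdjBetween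

variable {G : SimpleGraph V} {A B : Finset V} {κ : V → ℕ} {d : ℕ →₀ ℕ}

theorem symm (hG : G.NonAdjBetween A B) : G.NonAdjBetween B A :=
  fun _ _ hvw hadj => (hG hvw hadj).symm

theorem eq_of_mem_left (hG : G.NonAdjBetween A B) (hAB : Disjoint A B)
    (hκ : ∀ v w, G.Adj v w → κ v ≠ κ w) {v w : V} (hv : v ∈ A) (hw : w ∈ A)
    (h : κ v = κ w) : v = w := by
  by_contra hvw
  rcases hG hvw (fun hadj => hκ v w hadj h) with ⟨-, hwB⟩ | ⟨hvB, -⟩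
  · exact Finset.disjoint_left.mp hAB hw hwB
  · exact Finset.disjoint_left.mp hAB hv hvB

theorem ncard_fiber_le_two [Finite V] (hG : G.NonAdjBetween A B) (hAB : Disjoint A B)
    (hκ : ∀ v w, G.Adj v w → κ v ≠ κ w) (c : ℕ) : {v | κ v = c}.ncard ≤ 2 := by
  by_contra! h
  obtain ⟨x, y, z, hx, hy, hz, hxy, hxz, hyz⟩ := (Set.two_lt_ncard_iff (Set.toFinite _)).mp h
  have split : ∀ {u w}, κ u = c → κ w = c → u ≠ w → u ∈ A ∧ w ∈ B ∨ u ∈ B ∧ w ∈ A :=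
    fun hu hw huw => hG huw fun hadj => hκ _ _ hadj (hu.trans hw.symm)
  rcases split hx hy hxy with ⟨hxA, hyB⟩ | ⟨hxB, hyA⟩ <;>
    rcases split hx hz hxz with ⟨hxA', hzB⟩ | ⟨hxB', hzA⟩
  · exact hyz (hG.symm.eq_of_mem_left hAB.symm hκ hyB hzB (hy.trans hz.symm))
  · exact Finset.disjoint_left.mp hAB hxA hxB'
  · exact Finset.disjoint_left.mp hAB hxA' hxB
  · exact hyz (hG.eq_of_mem_left hAB hκ hyA hzA (hy.trans hz.symm))

theorem exists_fiber_eq_pair (hG : G.NonAdjBetween A B) (hκ : ∀ v w, G.Adj v w → κ v ≠ κ w)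
    {c : ℕ} (h : {v | κ v = c}.ncard = 2) : ∃ p ∈ A, ∃ q ∈ B, {v | κ v = c} = {p, q} := by
  obtain ⟨x, y, hxy, hset⟩ := Set.ncard_eq_two.mp h
  have hx : κ x = c := by simpa using hset.symm.subset (Set.mem_insert x {y})
  have hy : κ y = c := by simpa using hset.symm.subset (Set.mem_insert_of_mem x rfl)
  rcases hG hxy fun hadj => hκ x y hadj (hx.trans hy.symm) with ⟨hxA, hyB⟩ | ⟨hxB, hyA⟩
  · exact ⟨x, hxA, y, hyB, hset⟩
  · exact ⟨y, hyA, x, hxB, hset.trans (Set.pair_comm x y)⟩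

theorem exists_nonAdjPairings_fiber_eq (hG : G.NonAdjBetween A B)
    (hκ : κ ∈ properColoringsOfType G d) :
    ∃ pq : NonAdjPairings G A B (levelSet d 2),
      ∀ c : levelSet d 2, {v | κ v = c} = {(pq.1.1 c : V), (pq.1.2 c : V)} := by
  have hpair (c : levelSet d 2) : ∃ p ∈ A, ∃ q ∈ B, {v | κ v = c} = {p, q} :=
    hG.exists_fiber_eq_pair hκ.1 (by rw [hκ.2, (mem_levelSet two_ne_zero).mp c.2])
  choose P hPA Q hQB hPQ using hpair
  have hP (c) : κ (P c) = c := (hPQ c).symm.subset (Set.mem_insert _ _)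
  have hQ (c) : κ (Q c) = c := (hPQ c).symm.subset (Set.mem_insert_of_mem _ rfl)
  have hPinj : Function.Injective P := fun c c' h => Subtype.ext <| by rw [← hP c, ← hP c', h]
  have hQinj : Function.Injective Q := fun c c' h => Subtype.ext <| by rw [← hQ c, ← hQ c', h]
  exact ⟨⟨(⟨fun c => ⟨P c, hPA c⟩, fun c c' h => hPinj (congrArg Subtype.val h)⟩,
    ⟨fun c => ⟨Q c, hQB c⟩, fun c c' h => hQinj (congrArg Subtype.val h)⟩),
    fun c hadj => hκ.1 _ _ hadj ((hP c).trans (hQ c).symm)⟩, hPQ⟩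

theorem coeff_csf_eq_zero [Fintype V] (hG : G.NonAdjBetween A B) (hAB : Disjoint A B)
    (h : ¬ ((∀ c, d c ≤ 2) ∧ d.degree = Fintype.card V)) :
    MvPowerSeries.coeff d (csf G) = 0 := by
  have : properColoringsOfType G d = ∅ := Set.eq_empty_of_forall_notMem fun κ hκ =>
    h ⟨fun c => hκ.2 c ▸ hG.ncard_fiber_le_two hAB hκ.1 c,
      degree_eq_card_of_mem_properColoringsOfType hκ⟩
  rw [coeff_csf, this, Set.ncard_empty, Nat.cast_zero]

end SimpleGraph.NonAdjBetween

end Colorings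

section SlotColor

variable {X Y : Finset ℕ} {c : ℕ}

def slotColor (X Y : Finset ℕ) : X ⊕ X ⊕ Y → ℕ :=
  Sum.elim Subtype.val (Sum.elim Subtype.val Subtype.val)

theorem slotColor_preimage_of_mem_left (hXY : Disjoint X Y) (hc : c ∈ X) :
    slotColor X Y ⁻¹' {c} = {.inl ⟨c, hc⟩, .inr (.inl ⟨c, hc⟩)} := by
  ext (x | x | x) <;>
    simp only [slotColor, Set.mem_preimage, Sum.elim_inl, Sum.elim_inr, Set.mem_singleton_iff,
      Set.mem_insert_iff, Sum.inl.injEq, Sum.inr.injEq, Subtype.ext_iff, reduceCtorEq, or_false,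
      false_or, or_self, iff_false]
  rintro rfl
  exact disjoint_left.mp hXY hc x.2

theorem slotColor_preimage_of_mem_right (hXY : Disjoint X Y) (hc : c ∈ Y) :
    slotColor X Y ⁻¹' {c} = {.inr (.inr ⟨c, hc⟩)} := by
  ext (x | x | x) <;>
    simp only [slotColor, Set.mem_preimage, Sum.elim_inl, Sum.elim_inr, Set.mem_singleton_iff,
      Sum.inr.injEq, Subtype.ext_iff, reduceCtorEq, iff_false] <;>
    rintro rfl <;> exact disjoint_left.mp hXY x.2 hc

theorem slotColor_preimage_of_notMem (hX : c ∉ X) (hY : c ∉ Y) :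
    slotColor X Y ⁻¹' {c} = ∅ := by
  ext (x | x | x) <;>
    simp only [slotColor, Set.mem_preimage, Sum.elim_inl, Sum.elim_inr, Set.mem_singleton_iff,
      Set.mem_empty_iff_false, iff_false] <;>
    rintro rfl
  exacts [hX x.2, hX x.2, hY x.2]

end SlotColor

section PairingColoring

open Function

variable {V : Type} [Fintype V] [DecidableEq V] {G : SimpleGraph V} {A B : Finset V}
  {X Y : Finset ℕ} {c : ℕ} {d : ℕ →₀ ℕ} {κ : V → ℕ}

def pairingRest (pq : NonAdjPairings G A B X) : Finset V :=
  (univ.map (pq.1.1.trans (Embedding.subtype _)) ∪ univ.map (pq.1.2.trans (Embedding.subtype _)))ᶜ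

theorem mem_pairingRest {pq : NonAdjPairings G A B X} {v : V} :
    v ∈ pairingRest pq ↔ (∀ x, (pq.1.1 x : V) ≠ v) ∧ ∀ x, (pq.1.2 x : V) ≠ v := by
  simp [pairingRest]

theorem card_pairingRest (hAB : Disjoint A B) (pq : NonAdjPairings G A B X) :
    #(pairingRest pq) = Fintype.card V - 2 * #X := by
  rw [pairingRest, card_compl, card_union_of_disjoint, card_map, card_map, card_univ,
    Fintype.card_coe]
  · ring_nf
  · refine disjoint_left.mpr fun v hP hQ => ?_
    simp only [mem_map, mem_univ, true_and, Embedding.trans_apply, Embedding.subtype_apply] at hP hQ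
    obtain ⟨x, rfl⟩ := hP
    obtain ⟨x', hx'⟩ := hQ
    exact disjoint_left.mp hAB (pq.1.1 x).2 (hx' ▸ (pq.1.2 x').2)

abbrev PairingData (G : SimpleGraph V) (A B : Finset V) (X Y : Finset ℕ) :=
  Σ pq : NonAdjPairings G A B X, Y ≃ pairingRest pq

/-- The data `t` fills the slots `X ⊕ X ⊕ Y`: each color of `X` has one slot in `A` and one in `B`,
each color of `Y` one slot among the remaining vertices. Then `pairingColoring t` gives every
vertex the color of its slot. -/
def slotMap (t : PairingData G A B X Y) : X ⊕ X ⊕ Y → V :=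
  Sum.elim (fun x => t.1.1.1 x) (Sum.elim (fun x => t.1.1.2 x) fun y => t.2 y)

theorem slotMap_bijective (hAB : Disjoint A B) (t : PairingData G A B X Y) :
    Bijective (slotMap t) := by
  obtain ⟨⟨⟨P, Q⟩, hPQ⟩, s⟩ := t
  have hrest (y) := mem_pairingRest.mp (s y).2
  refine ⟨?_, fun v => ?_⟩
  · refine (Subtype.val_injective.comp P.injective).sumElim
      ((Subtype.val_injective.comp Q.injective).sumElim
        (Subtype.val_injective.comp s.injective) fun x y => (hrest y).2 x) ?_
    rintro x (x' | y)
    · intro h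
      have h' : (P x : V) = Q x' := h
      exact disjoint_left.mp hAB (P x).2 (h' ▸ (Q x').2)
    · exact (hrest y).1 x
  · by_cases hv : v ∈ pairingRest ⟨(P, Q), hPQ⟩
    · exact ⟨.inr (.inr (s.symm ⟨v, hv⟩)), by simp [slotMap]⟩
    · simp only [mem_pairingRest, not_and_or, not_forall, not_not] at hv
      rcases hv with ⟨x, hx⟩ | ⟨x, hx⟩
      · exact ⟨.inl x, hx⟩
      · exact ⟨.inr (.inl x), hx⟩

noncomputable def pairingColoring (t : PairingData G A B X Y) : V → ℕ :=
  extend (slotMap t) (slotColor X Y) 0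

theorem pairingColoring_slotMap (hAB : Disjoint A B) (t : PairingData G A B X Y)
    (x : X ⊕ X ⊕ Y) : pairingColoring t (slotMap t x) = slotColor X Y x :=
  (slotMap_bijective hAB t).1.extend_apply _ _ _

theorem fiber_pairingColoring (hAB : Disjoint A B) (t : PairingData G A B X Y) (c : ℕ) :
    {v | pairingColoring t v = c} = slotMap t '' (slotColor X Y ⁻¹' {c}) := by
  ext v
  obtain ⟨x, rfl⟩ := (slotMap_bijective hAB t).2 v
  simp [pairingColoring_slotMap hAB, (slotMap_bijective hAB t).1.mem_set_image]

theorem fiber_pairingColoring_of_mem_left (hAB : Disjoint A B) (hXY : Disjoint X Y)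
    (t : PairingData G A B X Y) (hc : c ∈ X) :
    {v | pairingColoring t v = c} = {(t.1.1.1 ⟨c, hc⟩ : V), (t.1.1.2 ⟨c, hc⟩ : V)} := by
  rw [fiber_pairingColoring hAB, slotColor_preimage_of_mem_left hXY hc, Set.image_pair]
  rfl

theorem fiber_pairingColoring_of_mem_right (hAB : Disjoint A B) (hXY : Disjoint X Y)
    (t : PairingData G A B X Y) (hc : c ∈ Y) :
    {v | pairingColoring t v = c} = {(t.2 ⟨c, hc⟩ : V)} := by
  rw [fiber_pairingColoring hAB, slotColor_preimage_of_mem_right hXY hc, Set.image_singleton]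
  rfl

theorem fiber_pairingColoring_of_notMem (hAB : Disjoint A B) (t : PairingData G A B X Y)
    (hX : c ∉ X) (hY : c ∉ Y) : {v | pairingColoring t v = c} = ∅ := by
  rw [fiber_pairingColoring hAB, slotColor_preimage_of_notMem hX hY, Set.image_empty]

theorem pairingColoring_mem_properColoringsOfType (hAB : Disjoint A B) (hd : ∀ c, d c ≤ 2)
    (t : PairingData G A B (levelSet d 2) (levelSet d 1)) :
    pairingColoring t ∈ properColoringsOfType G d := by
  have hXY : Disjoint (levelSet d 2) (levelSet d 1) := disjoint_levelSet_two_one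
  refine ⟨fun v w hadj hvw => ?_, fun c => ?_⟩
  · obtain ⟨c, hv, hw⟩ : ∃ c, v ∈ {u | pairingColoring t u = c} ∧
        w ∈ {u | pairingColoring t u = c} := ⟨_, rfl, hvw.symm⟩
    by_cases h2 : c ∈ levelSet d 2
    · rw [fiber_pairingColoring_of_mem_left hAB hXY t h2] at hv hw
      rcases hv with rfl | rfl <;> rcases hw with rfl | rfl
      · exact hadj.ne rfl
      · exact t.1.2 _ hadj
      · exact t.1.2 _ hadj.symm
      · exact hadj.ne rfl
    by_cases h1 : c ∈ levelSet d 1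
    · rw [fiber_pairingColoring_of_mem_right hAB hXY t h1] at hv hw
      exact hadj.ne (hv.trans hw.symm)
    · rwa [fiber_pairingColoring_of_notMem hAB t h2 h1] at hv
  · by_cases h2 : c ∈ levelSet d 2
    · have hPQ : (t.1.1.1 ⟨c, h2⟩ : V) ≠ t.1.1.2 ⟨c, h2⟩ := fun h =>
        disjoint_left.mp hAB (t.1.1.1 _).2 (h ▸ (t.1.1.2 _).2)
      rw [fiber_pairingColoring_of_mem_left hAB hXY t h2, Set.ncard_pair hPQ,
        (mem_levelSet two_ne_zero).mp h2]
    by_cases h1 : c ∈ levelSet d 1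
    · rw [fiber_pairingColoring_of_mem_right hAB hXY t h1, Set.ncard_singleton,
        (mem_levelSet one_ne_zero).mp h1]
    · rw [fiber_pairingColoring_of_notMem hAB t h2 h1, Set.ncard_empty,
        eq_zero_of_notMem_levelSet hd h2 h1]

theorem pairingColoring_injective (hG : G.NonAdjBetween A B) (hAB : Disjoint A B)
    (hd : ∀ c, d c ≤ 2) :
    Injective (pairingColoring : PairingData G A B (levelSet d 2) (levelSet d 1) → V → ℕ) := by
  intro t t' h
  have hκ := (pairingColoring_mem_properColoringsOfType hAB hd t).1
  have color := pairingColoring_slotMap hAB t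
  have color' := pairingColoring_slotMap hAB t'
  rw [← h] at color'
  obtain ⟨⟨⟨P, Q⟩, hPQ⟩, s⟩ := t
  obtain ⟨⟨⟨P', Q'⟩, hPQ'⟩, s'⟩ := t'
  obtain rfl : P = P' := Embedding.ext fun c => Subtype.ext <|
    hG.eq_of_mem_left hAB hκ (P c).2 (P' c).2 ((color (.inl c)).trans (color' (.inl c)).symm)
  obtain rfl : Q = Q' := Embedding.ext fun c => Subtype.ext <|
    hG.symm.eq_of_mem_left hAB.symm hκ (Q c).2 (Q' c).2
      ((color (.inr (.inl c))).trans (color' (.inr (.inl c))).symm)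
  obtain rfl : s = s' := Equiv.ext fun c => Subtype.ext <| by
    have hfib := fiber_pairingColoring_of_mem_right hAB disjoint_levelSet_two_one
      ⟨⟨(P, Q), hPQ⟩, s⟩ c.2
    have hc : (s' c : V) ∈ {v | pairingColoring ⟨⟨(P, Q), hPQ⟩, s⟩ v = c} :=
      color' (.inr (.inr c))
    rw [hfib] at hc
    exact hc.symm
  rfl

theorem exists_pairingColoring_eq (hG : G.NonAdjBetween A B) (hAB : Disjoint A B)
    (hd : ∀ c, d c ≤ 2) (hκ : κ ∈ properColoringsOfType G d) :
    ∃ t : PairingData G A B (levelSet d 2) (levelSet d 1), pairingColoring t = κ := by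
  obtain ⟨pq, hpq⟩ := hG.exists_nonAdjPairings_fiber_eq hκ
  have hP (c) : κ (pq.1.1 c) = c := (hpq c).symm.subset (Set.mem_insert _ _)
  have hQ (c) : κ (pq.1.2 c) = c := (hpq c).symm.subset (Set.mem_insert_of_mem _ rfl)
  have hsingle (c : levelSet d 1) : ∃ v, {v | κ v = c} = {v} :=
    Set.ncard_eq_one.mp (by rw [hκ.2, (mem_levelSet one_ne_zero).mp c.2])
  choose s hs using hsingle
  have hs' (c) : κ (s c) = c := (hs c).symm.subset rfl
  have hL21 {c c'} (h2 : c ∈ levelSet d 2) (h1 : c' ∈ levelSet d 1) : c ≠ c' := fun h =>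
    disjoint_left.mp disjoint_levelSet_two_one h2 (h ▸ h1)
  have hsRest (c) : s c ∈ pairingRest pq := mem_pairingRest.mpr
    ⟨fun c' h => hL21 c'.2 c.2 (by rw [← hP c', ← hs' c, h]),
      fun c' h => hL21 c'.2 c.2 (by rw [← hQ c', ← hs' c, h])⟩
  have hσ : Bijective fun c => (⟨s c, hsRest c⟩ : pairingRest pq) := by
    refine ⟨fun c c' h => Subtype.ext <| by
        rw [← hs' c, ← hs' c']; exact congrArg (κ ∘ Subtype.val) h,
      fun ⟨v, hv⟩ => ?_⟩
    have hmem : v ∈ {u | κ u = κ v} := rfl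
    by_cases h2 : κ v ∈ levelSet d 2
    · rw [hpq ⟨κ v, h2⟩] at hmem
      rcases hmem with h | h
      · exact ((mem_pairingRest.mp hv).1 ⟨κ v, h2⟩ h.symm).elim
      · exact ((mem_pairingRest.mp hv).2 ⟨κ v, h2⟩ h.symm).elim
    by_cases h1 : κ v ∈ levelSet d 1
    · rw [hs ⟨κ v, h1⟩] at hmem
      exact ⟨⟨κ v, h1⟩, Subtype.ext hmem.symm⟩
    · exact (apply_ne_zero_of_mem_properColoringsOfType hκ v
        (eq_zero_of_notMem_levelSet hd h2 h1)).elim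
  refine ⟨⟨pq, Equiv.ofBijective _ hσ⟩, funext fun v => ?_⟩
  obtain ⟨x, rfl⟩ := (slotMap_bijective hAB ⟨pq, Equiv.ofBijective _ hσ⟩).2 v
  rw [pairingColoring_slotMap hAB]
  rcases x with c | c | c
  exacts [(hP c).symm, (hQ c).symm, (hs' c).symm]

namespace SimpleGraph.NonAdjBetween

theorem ncard_properColoringsOfType (hG : G.NonAdjBetween A B) (hAB : Disjoint A B)
    (hd : ∀ c, d c ≤ 2)
    (hdeg : d.degree = Fintype.card V) :
    (properColoringsOfType G d).ncard =
      Nat.card (NonAdjPairings G A B (levelSet d 2)) * (#(levelSet d 1))! := by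
  classical
  have hbij : Bijective fun t : PairingData G A B (levelSet d 2) (levelSet d 1) =>
      (⟨pairingColoring t, pairingColoring_mem_properColoringsOfType hAB hd t⟩ :
        properColoringsOfType G d) :=
    ⟨fun t t' h => pairingColoring_injective hG hAB hd (congrArg Subtype.val h),
      fun ⟨κ, hκ⟩ => (exists_pairingColoring_eq hG hAB hd hκ).imp fun _ ht => Subtype.ext ht⟩
  have hrest (pq : NonAdjPairings G A B (levelSet d 2)) :
      Nat.card (levelSet d 1 ≃ pairingRest pq) = (#(levelSet d 1))! := by
    have hcard : Fintype.card (levelSet d 1) = Fintype.card (pairingRest pq) := by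
      rw [Fintype.card_coe, Fintype.card_coe, card_pairingRest hAB, ← hdeg,
        degree_eq_of_le_two hd]
      omega
    rw [Nat.card_eq_fintype_card, Fintype.card_equiv (Fintype.equivOfCardEq hcard),
      Fintype.card_coe]
  rw [← Nat.card_coe_set_eq, ← Nat.card_eq_of_bijective _ hbij, Nat.card_sigma,
    sum_congr rfl fun pq _ => hrest pq, sum_const, card_univ, smul_eq_mul,
    Nat.card_eq_fintype_card]

end SimpleGraph.NonAdjBetween

end PairingColoring

section Embeddings

open Function

variable {α β γ : Type*} [Fintype α] [Fintype β] [Fintype γ] [DecidableEq α] [DecidableEq β]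

def embeddingFixingEquiv (a : α) (b : β) :
    {f : α ↪ β // f a = b} ≃ ({x // x ≠ a} ↪ {y // y ≠ b}) where
  toFun f := ⟨fun x => ⟨f.1 x, fun h => x.2 (f.1.injective (h.trans f.2.symm))⟩,
    fun x x' h => Subtype.ext (f.1.injective (congrArg Subtype.val h))⟩
  invFun g := ⟨⟨fun x => if h : x = a then b else g ⟨x, h⟩, fun x x' h => by
    by_cases hx : x = a <;> by_cases hx' : x' = a <;>
      simp only [hx, hx', dite_true, dite_false] at h
    · exact hx.trans hx'.symm
    · exact ((g ⟨x', hx'⟩).2 h.symm).elim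
    · exact ((g ⟨x, hx⟩).2 h).elim
    · exact congrArg Subtype.val (g.injective (Subtype.ext h))⟩, by simp⟩
  left_inv f := Subtype.ext <| Embedding.ext fun x => by
    by_cases hx : x = a
    · subst hx
      simp [f.2]
    · simp only [Embedding.coeFn_mk, hx, ↓reduceDIte]
      rfl
  right_inv g := Embedding.ext fun x => Subtype.ext <| by simp [x.2]

theorem card_embedding_fixing (a : α) (b : β) :
    Fintype.card {f : α ↪ β // f a = b} =
      (Fintype.card β - 1).descFactorial (Fintype.card α - 1) := by
  rw [Fintype.card_congr (embeddingFixingEquiv a b), Fintype.card_embedding_eq,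
    Fintype.card_subtype_compl, Fintype.card_subtype_compl, Fintype.card_subtype_eq,
    Fintype.card_subtype_eq]

variable [DecidableEq γ]

theorem card_embedding_pairs_meeting (b : β) (c : γ) :
    Fintype.card {fg : (α ↪ β) × (α ↪ γ) // ∃ x, fg.1 x = b ∧ fg.2 x = c} =
      Fintype.card α * ((Fintype.card β - 1).descFactorial (Fintype.card α - 1) *
        (Fintype.card γ - 1).descFactorial (Fintype.card α - 1)) := by
  have e : {fg : (α ↪ β) × (α ↪ γ) // ∃ x, fg.1 x = b ∧ fg.2 x = c} ≃
      Σ x : α, {f : α ↪ β // f x = b} × {g : α ↪ γ // g x = c} :=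
    { toFun := fun fg => ⟨fg.2.choose, ⟨fg.1.1, fg.2.choose_spec.1⟩, ⟨fg.1.2, fg.2.choose_spec.2⟩⟩
      invFun := fun t => ⟨(t.2.1.1, t.2.2.1), t.1, t.2.1.2, t.2.2.2⟩
      left_inv := fun _ => rfl
      right_inv := fun ⟨x, ⟨f, hf⟩, ⟨g, hg⟩⟩ => by
        have hex : ∃ x', f x' = b ∧ g x' = c := ⟨x, hf, hg⟩
        obtain rfl : hex.choose = x := f.injective (hex.choose_spec.1.trans hf.symm)
        rfl }
  rw [Fintype.card_congr e, Fintype.card_sigma]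
  simp only [Fintype.card_prod, card_embedding_fixing, sum_const, card_univ, smul_eq_mul]

end Embeddings

theorem Fin.card_filter_le_val (n m : ℕ) : #{v : Fin n | m ≤ (v : ℕ)} = n - m := by
  have := card_filter_add_card_filter_not (s := univ) fun v : Fin n => (v : ℕ) < m
  simp only [Fin.card_filter_val_lt, not_lt, card_univ, Fintype.card_fin] at this
  omega

section Barbell

variable (a b : ℕ)

theorem barbellG_adj_iff {c : ℕ} {v w : Fin (a + c + b)} :
    (barbellG a c b).Adj v w ↔ (v : ℕ) ≠ w ∧
      ((((v : ℕ) < a ∧ (w : ℕ) < a) ∨ ((v : ℕ) + 1 = w ∧ a ≤ w ∧ (w : ℕ) + 1 ≤ a + c) ∨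
          (a + c ≤ (v : ℕ) + 1 ∧ a + c ≤ (w : ℕ) + 1)) ∨
        (((w : ℕ) < a ∧ (v : ℕ) < a) ∨ ((w : ℕ) + 1 = v ∧ a ≤ v ∧ (v : ℕ) + 1 ≤ a + c) ∨
          (a + c ≤ (w : ℕ) + 1 ∧ a + c ≤ (v : ℕ) + 1))) := by
  rw [barbellG, SimpleGraph.fromRel_adj, Fin.val_injective.ne_iff]

theorem barbellG_zero_nonAdjBetween :
    (barbellG a 0 b).NonAdjBetween {v | (v : ℕ) < a - 1} {v | a ≤ (v : ℕ)} := by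
  intro v w hvw hadj
  rw [barbellG_adj_iff] at hadj
  have := Fin.val_injective.ne hvw
  simp only [mem_filter, mem_univ, true_and]
  omega

theorem card_nonAdjPairings_barbellG_zero (X : Finset ℕ) :
    Nat.card (NonAdjPairings (barbellG a 0 b) {v | (v : ℕ) < a - 1} {v | a ≤ (v : ℕ)} X) =
      (a - 1).descFactorial #X * b.descFactorial #X := by
  have hvalid (pq : (X ↪ ({v | (v : ℕ) < a - 1} : Finset (Fin (a + 0 + b)))) ×
      (X ↪ ({v | a ≤ (v : ℕ)} : Finset (Fin (a + 0 + b))))) :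
      ∀ x, ¬ (barbellG a 0 b).Adj (pq.1 x) (pq.2 x) := fun x hadj => by
    have h1 := (pq.1 x).2
    have h2 := (pq.2 x).2
    simp only [mem_filter, mem_univ, true_and] at h1 h2
    rw [barbellG_adj_iff] at hadj
    omega
  rw [Nat.card_congr (Equiv.subtypeUnivEquiv hvalid), Nat.card_prod, Nat.card_eq_fintype_card,
    Nat.card_eq_fintype_card, Fintype.card_embedding_eq, Fintype.card_embedding_eq,
    Fintype.card_coe, Fintype.card_coe, Fintype.card_coe, Fin.card_filter_val_lt,
    Fin.card_filter_le_val]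
  congr 2 <;> omega

theorem barbellG_one_nonAdjBetween :
    (barbellG a 1 b).NonAdjBetween {v | (v : ℕ) < a} {v | a ≤ (v : ℕ)} := by
  intro v w hvw hadj
  rw [barbellG_adj_iff] at hadj
  have := Fin.val_injective.ne hvw
  simp only [mem_filter, mem_univ, true_and]
  omega

theorem card_nonAdjPairings_barbellG_one (ha : 1 ≤ a) (X : Finset ℕ) :
    Nat.card (NonAdjPairings (barbellG a 1 b) {v | (v : ℕ) < a} {v | a ≤ (v : ℕ)} X) +
        #X * ((a - 1).descFactorial (#X - 1) * b.descFactorial (#X - 1)) =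
      a.descFactorial #X * (b + 1).descFactorial #X := by
  classical
  set A : Finset (Fin (a + 1 + b)) := {v | (v : ℕ) < a}
  set B : Finset (Fin (a + 1 + b)) := {v | a ≤ (v : ℕ)}
  have hA : Fintype.card A = a := by
    rw [Fintype.card_coe, Fin.card_filter_val_lt]
    omega
  have hB : Fintype.card B = b + 1 := by
    rw [Fintype.card_coe, Fin.card_filter_le_val]
    omega
  let last : A := ⟨⟨a - 1, by omega⟩, by simp only [A, mem_filter, mem_univ, true_and]; omega⟩
  let first : B := ⟨⟨a, by omega⟩, by simp [B]⟩
  have hvalid (pq : (X ↪ A) × (X ↪ B)) :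
      (∀ x, ¬ (barbellG a 1 b).Adj (pq.1 x) (pq.2 x)) ↔ ¬ ∃ x, pq.1 x = last ∧ pq.2 x = first := by
    rw [not_exists]
    refine forall_congr' fun x => ?_
    have h1 := (pq.1 x).2
    have h2 := (pq.2 x).2
    simp only [A, B, mem_filter, mem_univ, true_and] at h1 h2
    rw [barbellG_adj_iff, Subtype.ext_iff, Subtype.ext_iff, Fin.ext_iff, Fin.ext_iff]
    simp only [last, first]
    omega
  have hle := Fintype.card_subtype_le fun pq : (X ↪ A) × (X ↪ B) =>
    ∃ x, pq.1 x = last ∧ pq.2 x = first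
  rw [card_embedding_pairs_meeting, Fintype.card_prod, Fintype.card_embedding_eq,
    Fintype.card_embedding_eq, hA, hB, Nat.add_sub_cancel, Fintype.card_coe] at hle
  rw [Nat.card_congr (Equiv.subtypeEquivRight hvalid), Nat.card_eq_fintype_card,
    Fintype.card_subtype_compl, card_embedding_pairs_meeting, Fintype.card_prod,
    Fintype.card_embedding_eq, Fintype.card_embedding_eq, hA, hB, Nat.add_sub_cancel,
    Fintype.card_coe]
  omega

theorem csf_barbellG_zero (ha : 1 ≤ a) (hb : b ≤ a) :
    csf (barbellG a 0 b) =
      (((a - 1)! * b ! : ℕ) : ℚ) •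
        ∑ i ∈ range (b + 1), (((a : ℚ) + b) - 2 * i) • (esymm (a + b - i) * esymm i) := by
  have hG := barbellG_zero_nonAdjBetween a b
  have hAB : Disjoint ({v | (v : ℕ) < a - 1} : Finset (Fin (a + 0 + b)))
      ({v | a ≤ (v : ℕ)} : Finset (Fin (a + 0 + b))) :=
    disjoint_filter.mpr fun v _ h h' => by omega
  ext d
  simp only [map_smul, map_sum, smul_eq_mul]
  by_cases hd : (∀ c, d c ≤ 2) ∧ d.degree = a + b
  · obtain ⟨hd, hdeg⟩ := hd
    have hkm : 2 * #(levelSet d 2) + #(levelSet d 1) = a + b := by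
      rw [← degree_eq_of_le_two hd, hdeg]
    rw [coeff_csf, hG.ncard_properColoringsOfType hAB hd (by simp [hdeg]),
      card_nonAdjPairings_barbellG_zero,
      sum_congr rfl fun i hi => by
        rw [coeff_esymm_mul_esymm_of_le_two hd (by rw [hdeg]; rw [mem_range] at hi; omega)],
      show ((a : ℚ) + b) = 2 * #(levelSet d 2) + #(levelSet d 1) by exact_mod_cast hkm.symm,
      sum_range_sub_mul_choose]
    exact_mod_cast descFactorial_mul_factorial_eq_barbell_zero ha hb hkm
  · rw [hG.coeff_csf_eq_zero hAB (by simpa using hd), sum_eq_zero fun i hi => by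
      rw [coeff_esymm_mul_esymm_eq_zero, mul_zero]
      rw [Nat.sub_add_cancel (by rw [mem_range] at hi; omega)]
      exact hd, mul_zero]

theorem csf_barbellG_one (ha : 1 ≤ a) (hb : b ≤ a) :
    csf (barbellG a 1 b) =
      (((a - 1)! * b ! : ℕ) : ℚ) •
        ((((a : ℚ) - 1) * ((b : ℚ) + 1)) • (esymm a * esymm (b + 1)) +
          ∑ i ∈ range (b + 1),
            (((a : ℚ) + b + 1) - 2 * i) • (esymm (a + b + 1 - i) * esymm i)) := by
  have hG := barbellG_one_nonAdjBetween a b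
  have hAB : Disjoint ({v | (v : ℕ) < a} : Finset (Fin (a + 1 + b)))
      ({v | a ≤ (v : ℕ)} : Finset (Fin (a + 1 + b))) :=
    disjoint_filter.mpr fun v _ h h' => by omega
  ext d
  simp only [map_smul, map_add, map_sum, smul_eq_mul]
  by_cases hd : (∀ c, d c ≤ 2) ∧ d.degree = a + b + 1
  · obtain ⟨hd, hdeg⟩ := hd
    have hkm : 2 * #(levelSet d 2) + #(levelSet d 1) = a + 1 + b := by
      rw [← degree_eq_of_le_two hd, hdeg]
      ring
    have hpairs : (Nat.card (NonAdjPairings (barbellG a 1 b) {v | (v : ℕ) < a} {v | a ≤ (v : ℕ)}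
        (levelSet d 2)) : ℚ) = ((a.descFactorial #(levelSet d 2) *
          (b + 1).descFactorial #(levelSet d 2) : ℕ) : ℚ) - ((#(levelSet d 2) *
          ((a - 1).descFactorial (#(levelSet d 2) - 1) *
            b.descFactorial (#(levelSet d 2) - 1)) : ℕ) : ℚ) := by
      rw [eq_sub_iff_add_eq]
      exact_mod_cast card_nonAdjPairings_barbellG_one a b ha (levelSet d 2)
    rw [coeff_csf, hG.ncard_properColoringsOfType hAB hd (by rw [hdeg, Fintype.card_fin]; ring), Nat.cast_mul,
      hpairs, coeff_esymm_mul_esymm_of_le_two hd (by rw [hdeg]; ring),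
      sum_congr rfl fun i hi => by
        rw [coeff_esymm_mul_esymm_of_le_two hd (by rw [hdeg]; rw [mem_range] at hi; omega)],
      show ((a : ℚ) + b + 1) = 2 * #(levelSet d 2) + #(levelSet d 1) by
        exact_mod_cast (hkm.trans (by ring)).symm,
      sum_range_sub_mul_choose, descFactorial_mul_factorial_eq_barbell_one ha hb hkm]
    push_cast
    ring
  · rw [hG.coeff_csf_eq_zero hAB (by simpa [add_right_comm] using hd),
      coeff_esymm_mul_esymm_eq_zero (by rwa [← add_assoc]), sum_eq_zero fun i hi => by
        rw [coeff_esymm_mul_esymm_eq_zero, mul_zero]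
        rw [Nat.sub_add_cancel (by rw [mem_range] at hi; omega)]
        exact hd]
    simp

end Barbell

/-- For `a ≥ 1` and `0 ≤ b ≤ a`,
`X_{K(ab)} = (a-1)! b! Σ_{i=0}^{b} (a+b-2i) e_{a+b-i} e_i` and
`X_{K(a1b)} = (a-1)! b! ((a-1)(b+1) e_a e_{b+1} + Σ_{i=0}^{b} (a+b+1-2i) e_{a+b+1-i} e_i)`. -/
theorem stmt_14 (a b : ℕ) (ha : 1 ≤ a) (hb : b ≤ a) :
    (csf (barbellG a 0 b) =
      (((a - 1).factorial * b.factorial : ℕ) : ℚ) •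
        ∑ i ∈ Finset.range (b + 1),
          (((a : ℚ) + b) - 2 * i) • (esymm (a + b - i) * esymm i)) ∧
    (csf (barbellG a 1 b) =
      (((a - 1).factorial * b.factorial : ℕ) : ℚ) •
        ((((a : ℚ) - 1) * ((b : ℚ) + 1)) • (esymm a * esymm (b + 1)) +
          ∑ i ∈ Finset.range (b + 1),
            (((a : ℚ) + b + 1) - 2 * i) • (esymm (a + b + 1 - i) * esymm i))) :=
  ⟨csf_barbellG_zero a b ha hb, csf_barbellG_one a b ha hb⟩
end
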